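/- arXiv:1005.4310 — 2 statements merged into one kernel-verified Lean document; each statement's English description precedes it below -/
import Mathlib

section
/- Let n ≥ 2, 1 ≤ p ≤ n−1, and f(λ) = p·n·λ² − 2(n²−1)(p+1)·λ + n(n²−1)(p+2). Then for all λ with 0 < λ ≤ p+2, f(λ) ≥ 0; moreover there exists λ in (0, p+2] with f(λ) = 0 if and only if p = n−1 (and then λ = p+2 = n+1). -/
/-!
Writing `c = n - 1 - p`, the quadratic splits as
`f λ = (p + 2 - λ) · (2(n² - 1)(p + 1) - pn(λ + p + 2)) + (p + 2) · c · (nc - 2)`.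
For `λ ≤ p + 2` the first product is nonnegative, since the slope factor is smallest at
`λ = p + 2`, where it equals `2c(n(p + 1) + 1)`. If `c = 0` then `f λ = n(n - 1)(λ - (n + 1))²`,
which vanishes only at `λ = n + 1 = p + 2`; if `c ≥ 1` then `n ≥ 3`, so `nc - 2 > 0` and `f > 0`.
-/

def destabQuad (a b l : ℝ) : ℝ :=
  b * a * l ^ 2 - 2 * (a ^ 2 - 1) * (b + 1) * l + a * (a ^ 2 - 1) * (b + 2)

variable {a b l : ℝ}

theorem destabQuad_eq_slope_add_const (a b l : ℝ) :
    destabQuad a b l = (b + 2 - l) * (2 * (a ^ 2 - 1) * (b + 1) - a * b * (l + b + 2))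
      + (b + 2) * ((a - 1 - b) * (a * (a - 1 - b) - 2)) := by
  unfold destabQuad; ring

theorem destabQuad_slope_nonneg (ha : 0 ≤ a) (hb : 0 ≤ b) (hba : b ≤ a - 1) (hl : l ≤ b + 2) :
    0 ≤ 2 * (a ^ 2 - 1) * (b + 1) - a * b * (l + b + 2) := by
  have hab : 0 ≤ a * b := mul_nonneg ha hb
  calc (0 : ℝ) ≤ 2 * (a - 1 - b) * (a * (b + 1) + 1) := by
        have : 0 ≤ a * (b + 1) := by positivity
        nlinarith
    _ = 2 * (a ^ 2 - 1) * (b + 1) - a * b * (2 * (b + 2)) := by ring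
    _ ≤ 2 * (a ^ 2 - 1) * (b + 1) - a * b * (l + b + 2) := by gcongr; linarith

theorem destabQuad_pos (hb : 1 ≤ b) (hba : b ≤ a - 2) (hl : l ≤ b + 2) :
    0 < destabQuad a b l := by
  have ha : 0 ≤ a := by linarith
  have hc : 1 ≤ a - 1 - b := by linarith
  have hac : 2 < a * (a - 1 - b) := by nlinarith
  rw [destabQuad_eq_slope_add_const]
  have hslope := destabQuad_slope_nonneg ha (by linarith) (by linarith) hl
  have hconst : 0 < (b + 2) * ((a - 1 - b) * (a * (a - 1 - b) - 2)) := by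
    have : 0 < a * (a - 1 - b) - 2 := by linarith
    have : 0 < b + 2 := by linarith
    positivity
  nlinarith [mul_nonneg (by linarith : 0 ≤ b + 2 - l) hslope]

theorem destabQuad_sub_one (a l : ℝ) :
    destabQuad a (a - 1) l = a * (a - 1) * (l - (a + 1)) ^ 2 := by
  unfold destabQuad; ring

theorem destabQuad_sub_one_eq_zero_iff (ha : 1 < a) : destabQuad a (a - 1) l = 0 ↔ l = a + 1 := by
  have : a * (a - 1) ≠ 0 := by nlinarith
  rw [destabQuad_sub_one, mul_eq_zero, or_iff_right this, sq_eq_zero_iff, sub_eq_zero]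

theorem stmt_3_general (n p : ℤ) (hp1 : 1 ≤ p) (hp2 : p ≤ n - 1)
    (f : ℝ → ℝ)
    (hf : ∀ l : ℝ, f l = (p : ℝ) * n * l ^ 2 - 2 * ((n : ℝ) ^ 2 - 1) * ((p : ℝ) + 1) * l
      + (n : ℝ) * ((n : ℝ) ^ 2 - 1) * ((p : ℝ) + 2)) :
    (∀ l : ℝ, 0 < l → l ≤ (p : ℝ) + 2 → 0 ≤ f l)
      ∧ ((∃ l : ℝ, 0 < l ∧ l ≤ (p : ℝ) + 2 ∧ f l = 0) ↔ p = n - 1)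
      ∧ (∀ l : ℝ, 0 < l → l ≤ (p : ℝ) + 2 → f l = 0 →
          l = (p : ℝ) + 2 ∧ (p : ℝ) + 2 = (n : ℝ) + 1) := by
  obtain rfl : f = destabQuad n p := funext hf
  have hp1' : (1 : ℝ) ≤ p := by exact_mod_cast hp1
  rcases hp2.eq_or_lt with rfl | hlt
  · push_cast at hp1' ⊢
    have hn : (1 : ℝ) < n := by linarith
    refine ⟨fun l _ _ => by
        rw [destabQuad_sub_one]; exact mul_nonneg (by nlinarith) (sq_nonneg _),
      ⟨fun _ => rfl, fun _ => ⟨n + 1, by linarith, by linarith,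
        (destabQuad_sub_one_eq_zero_iff hn).2 rfl⟩⟩, fun l _ _ hz => ?_⟩
    rw [(destabQuad_sub_one_eq_zero_iff hn).1 hz]
    constructor <;> ring
  · have hpn : (p : ℝ) ≤ n - 2 := by
      have : p ≤ n - 2 := by omega
      exact_mod_cast this
    have hpos l (hl : l ≤ (p : ℝ) + 2) : 0 < destabQuad n p l := destabQuad_pos hp1' hpn hl
    exact ⟨fun l _ hl => (hpos l hl).le,
      ⟨fun ⟨l, _, hl, hz⟩ => absurd hz (hpos l hl).ne', fun h => by omega⟩,
      fun l _ hl hz => absurd hz (hpos l hl).ne'⟩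

/-- For integers `n ≥ 2`, `1 ≤ p ≤ n−1` and
`f(λ) = p·n·λ² − 2(n²−1)(p+1)·λ + n(n²−1)(p+2)`:
`f(λ) ≥ 0` on `(0, p+2]`; there is a zero of `f` in `(0, p+2]` iff `p = n−1`;
and any zero `λ` of `f` in `(0, p+2]` satisfies `λ = p+2` and `p + 2 = n + 1`. -/
theorem stmt_3 (n p : ℤ) (hn : 2 ≤ n) (hp1 : 1 ≤ p) (hp2 : p ≤ n - 1)
    (f : ℝ → ℝ)
    (hf : ∀ l : ℝ, f l = (p : ℝ) * n * l ^ 2 - 2 * ((n : ℝ) ^ 2 - 1) * ((p : ℝ) + 1) * l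
      + (n : ℝ) * ((n : ℝ) ^ 2 - 1) * ((p : ℝ) + 2)) :
    (∀ l : ℝ, 0 < l → l ≤ (p : ℝ) + 2 → 0 ≤ f l)
      ∧ ((∃ l : ℝ, 0 < l ∧ l ≤ (p : ℝ) + 2 ∧ f l = 0) ↔ p = n - 1)
      ∧ (∀ l : ℝ, 0 < l → l ≤ (p : ℝ) + 2 → f l = 0 →
          l = (p : ℝ) + 2 ∧ (p : ℝ) + 2 = (n : ℝ) + 1) :=
  stmt_3_general n p hp1 hp2 f hf
end

section
/- Let X be an n-dimensional Fano manifold with anticanonical polarization, Z a smooth submanifold of codimension r, and σ: X̂ → X the blowup along Z with exceptional divisor E. Then for 0 < x < ε(Z), the quantity −μ(X)·ã₀(x) + ã₁(x) + ã₀′(x)/2 equals (r − x)·(σ*(−K_X) − xE)^{n−1}·E / (2(n−1)!); hence if ε(Z) ≤ r then (X, −K_X) is slope stable with respect to Z. -/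
/-!
Expanding `S = U − x·T` and `n! = n·(n−1)!`, the terms in `U` cancel in
`(n/2)·a₀(x) − a₁(x) + T(x)/(2(n−1)!)`, which leaves `(r − x)·T(x)/(2(n−1)!)`; the constant
terms cancel because `a₁ = (n/2)·a₀`. For `ε ≤ r` this is positive on `(0, λ)`, so the numerator
of `μ_λ` exceeds `n/2` times its denominator, and the denominator is positive because `a₀` has
negative derivative `−T/(n−1)!` there.
-/

open intervalIntegral MeasureTheory Set

theorem lt_intervalIntegral_div_intervalIntegral {f g : ℝ → ℝ} {a b c : ℝ} (hab : a < b)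
    (hf : IntervalIntegrable f volume a b) (hg : IntervalIntegrable g volume a b)
    (hg_pos : ∀ x ∈ Ioo a b, 0 < g x) (hlt : ∀ x ∈ Ioo a b, c * g x < f x) :
    c < (∫ x in a..b, f x) / ∫ x in a..b, g x := by
  have hg_int : 0 < ∫ x in a..b, g x := intervalIntegral_pos_of_pos_on hg hg_pos hab
  have hdiff_int : 0 < ∫ x in a..b, f x - c * g x :=
    intervalIntegral_pos_of_pos_on (hf.sub (hg.const_mul c)) (fun x hx => sub_pos.2 (hlt x hx))
      hab
  rw [integral_sub hf (hg.const_mul c), intervalIntegral.integral_const_mul] at hdiff_int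
  rw [lt_div_iff₀ hg_int]
  linarith

open intervalIntegral in
theorem stmt_12_general (n r : ℕ) (hn : 2 ≤ n)
    (ε : ℝ)
    (S U T : ℝ → ℝ) (hContU : Continuous U) (hContT : Continuous T)
    (hSUT : ∀ x : ℝ, S x = U x - x * T x)
    (a0 a1 : ℝ → ℝ)
    (ha0 : ∀ x : ℝ, a0 x = S x / (n.factorial : ℝ))
    (ha1 : ∀ x : ℝ, a1 x = (U x - ((r : ℝ) - 1) * T x) / (2 * ((n - 1).factorial : ℝ)))
    (hderiv : ∀ x : ℝ, HasDerivAt a0 (-(T x) / ((n - 1).factorial : ℝ)) x)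
    (a0c a1c : ℝ) (ha0c : a0c = a0 0)
    (hμ : a1c = ((n : ℝ) / 2) * a0c)
    (hpos : ∀ x : ℝ, 0 < x → x < ε → 0 < T x) :
    (∀ x : ℝ, 0 < x → x < ε →
        -((n : ℝ) / 2) * (a0c - a0 x) + (a1c - a1 x) + (T x / ((n - 1).factorial : ℝ)) / 2
          = ((r : ℝ) - x) * T x / (2 * ((n - 1).factorial : ℝ)))
      ∧ (ε ≤ (r : ℝ) → ∀ lam : ℝ, 0 < lam → lam ≤ ε →
          ((n : ℝ) / 2) <
            (∫ x in (0 : ℝ)..lam, (a1c - a1 x) + (T x / ((n - 1).factorial : ℝ)) / 2)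
              / (∫ x in (0 : ℝ)..lam, a0c - a0 x)) := by
  have hfac : (n.factorial : ℝ) = n * (n - 1).factorial := by
    exact_mod_cast (Nat.mul_factorial_pred (by omega)).symm
  have hdefect : ∀ x : ℝ,
      -((n : ℝ) / 2) * (a0c - a0 x) + (a1c - a1 x) + (T x / ((n - 1).factorial : ℝ)) / 2
        = ((r : ℝ) - x) * T x / (2 * ((n - 1).factorial : ℝ)) := by
    intro x
    rw [ha0, ha1, hSUT, hμ, hfac]
    field_simp
    ring
  refine ⟨fun x _ _ => hdefect x, fun hεr lam hlam hlamε => ?_⟩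
  have hcont_a0 : Continuous a0 := continuous_iff_continuousAt.2 fun x => (hderiv x).continuousAt
  have hcont_a1 : Continuous a1 := by
    rw [funext ha1]
    fun_prop
  have ha0_anti : StrictAntiOn a0 (Icc 0 lam) := by
    refine strictAntiOn_of_deriv_neg (convex_Icc 0 lam) hcont_a0.continuousOn fun x hx => ?_
    rw [interior_Icc] at hx
    rw [(hderiv x).deriv, neg_div, neg_lt_zero]
    exact div_pos (hpos x hx.1 (hx.2.trans_le hlamε)) (by positivity)
  refine lt_intervalIntegral_div_intervalIntegral hlam
    (Continuous.intervalIntegrable (by fun_prop) _ _) (Continuous.intervalIntegrable (by fun_prop) _ _)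
    (fun x hx => ?_) (fun x hx => ?_)
  · rw [ha0c, sub_pos]
    exact ha0_anti (left_mem_Icc.2 hlam.le) (Ioo_subset_Icc_self hx) hx.1
  · have hxε : x < ε := hx.2.trans_le hlamε
    have hrx : 0 < (r : ℝ) - x := by linarith
    have hT := hpos x hx.1 hxε
    have hrhs : 0 < ((r : ℝ) - x) * T x / (2 * ((n - 1).factorial : ℝ)) := by positivity
    linarith [hdefect x]

open intervalIntegral in
/-- Lemma 2.10: `X` an `n`-dimensional Fano manifold with the
anticanonical polarization `A = −K_X`, `Z ⊂ X` smooth of codimension `r`,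
`σ : X̂ → X` the blowup with exceptional divisor `E`. Encode the intersection
data as real functions: `S x = (σ*A − xE)^n`, `U x = (σ*A − xE)^{n−1}·σ*A`,
`T x = (σ*A − xE)^{n−1}·E`, so `S x = U x − x·T x` (`hSUT`). Then
`a₀(x) = S x / n!` (`ha0`) and, since `K_{X̂} = −σ*A + (r−1)E`,
`a₁(x) = −K_{X̂}·(σ*A − xE)^{n−1}/(2(n−1)!) = (U x − (r−1)T x)/(2(n−1)!)`
(`ha1`); moreover `a₀′(x) = −T x/(n−1)!` (`hderiv`), so `ã₀′(x) = T x/(n−1)!`.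
The coefficients of `(X, −K_X)` are `a₀ = a₀(0)`, `a₁ = a₁(0)` with
`a₁ = μ(X)·a₀ = (n/2)·a₀` (`hμ`). Since `σ*A − xE` is ample on `(0, ε(Z))`,
`T x > 0` there (`hpos`). CONCLUSION: for `0 < x < ε(Z)`,
`−μ(X)·ã₀(x) + ã₁(x) + ã₀′(x)/2 = (r − x)·T x/(2(n−1)!)`; hence if
`ε(Z) ≤ r` then for every `λ ∈ (0, ε(Z)]` the quotient slope
`μ_λ(O_Z) = (∫₀^λ (ã₁ + ã₀′/2)) / (∫₀^λ ã₀)` exceeds `μ(X) = n/2`, i.e.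
`(X, −K_X)` is slope stable with respect to `Z`. -/
theorem stmt_12 (n r : ℕ) (hn : 2 ≤ n) (hr1 : 1 ≤ r) (hrn : r ≤ n)
    (ε : ℝ) (hε : 0 < ε)
    (S U T : ℝ → ℝ) (hContU : Continuous U) (hContT : Continuous T)
    (hSUT : ∀ x : ℝ, S x = U x - x * T x)
    (a0 a1 : ℝ → ℝ)
    (ha0 : ∀ x : ℝ, a0 x = S x / (n.factorial : ℝ))
    (ha1 : ∀ x : ℝ, a1 x = (U x - ((r : ℝ) - 1) * T x) / (2 * ((n - 1).factorial : ℝ)))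
    (hderiv : ∀ x : ℝ, HasDerivAt a0 (-(T x) / ((n - 1).factorial : ℝ)) x)
    (a0c a1c : ℝ) (ha0c : a0c = a0 0) (ha1c : a1c = a1 0)
    (hμ : a1c = ((n : ℝ) / 2) * a0c)
    (hpos : ∀ x : ℝ, 0 < x → x < ε → 0 < T x) :
    (∀ x : ℝ, 0 < x → x < ε →
        -((n : ℝ) / 2) * (a0c - a0 x) + (a1c - a1 x) + (T x / ((n - 1).factorial : ℝ)) / 2
          = ((r : ℝ) - x) * T x / (2 * ((n - 1).factorial : ℝ)))
      ∧ (ε ≤ (r : ℝ) → ∀ lam : ℝ, 0 < lam → lam ≤ ε →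
          ((n : ℝ) / 2) <
            (∫ x in (0 : ℝ)..lam, (a1c - a1 x) + (T x / ((n - 1).factorial : ℝ)) / 2)
              / (∫ x in (0 : ℝ)..lam, a0c - a0 x)) :=
  stmt_12_general n r hn ε S U T hContU hContT hSUT a0 a1 ha0 ha1 hderiv a0c a1c ha0c hμ hpos
end
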